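/- (Fazekas) Let L be a regular language over an alphabet Σ. Then pow(L) = {p^k : p ∈ L, k ∈ ℕ} is a regular language if and only if pow(L) \ L is a regular language whose root √(pow(L) \ L) is finite. -/

import Mathlib

/-!
Write `K = pow(L) \ L`. Since `pow(L) = L ∪ K`, only the finiteness of `√K` needs an argument,
and it uses nothing but that `K` is regular and consists of proper powers `rᵉ`, `e ≥ 2`.
Fix a DFA `M` for `K` and `p ∈ √K`, so `pᵏ ∈ K` for some `k ≥ 2`.

If `|p|` exceeds the number of states, a loop `y` of `M` inside the last copy of `p = xyz`
(`z ≠ []`) can be pumped inside `K`. For large `i` the proper period of `pᵏ⁻¹xyⁱz` and the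
period `|y|` of `yⁱ` combine (Fine–Wilf) into a period `g ≤ |y| < |p|` of the whole word, so
`pᵏ⁻¹xy` has the periods `|p|` and `g`, against the primitivity of `p`.

Over an infinite alphabet the length bound is not enough, so we also show that `p` is determined
by the transition maps of its letters: replacing one letter of `pᵏ` by a letter with the same
transition map stays in `K`, but a word invariant under rotation by `|p|` stops being a proper
power when one of its letters is changed.
-/

/-- `wpow v n` is the word `vⁿ`, the `n`-fold concatenation of the word `v` with itself. -/
def wpow {α : Type*} (v : List α) : ℕ → List α
  | 0 => []
  | n + 1 => v ++ wpow v n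

/-- A nonempty word `u` is primitive if `u = vⁿ` implies `n = 1`. -/
def Primitive {α : Type*} (u : List α) : Prop :=
  u ≠ [] ∧ ∀ (v : List α) (n : ℕ), u = wpow v n → n = 1

/-- The root of a language: the set of primitive roots `√u` of the nonempty words `u ∈ L`. -/
def langRoot {α : Type*} (L : Language α) : Language α :=
  {p : List α | Primitive p ∧ ∃ u ∈ L, ∃ d : ℕ, 1 ≤ d ∧ u = wpow p d}

/-- The full power of a language: `pow(L) = {pᵏ : p ∈ L, k ∈ ℕ}`. -/
def powL {α : Type*} (L : Language α) : Language α :=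
  {w : List α | ∃ p ∈ L, ∃ k : ℕ, w = wpow p k}

section

variable {α σ : Type*}

theorem wpow_zero (v : List α) : wpow v 0 = [] := rfl

theorem wpow_succ (v : List α) (n : ℕ) : wpow v (n + 1) = v ++ wpow v n := rfl

theorem wpow_one (v : List α) : wpow v 1 = v := List.append_nil v

theorem wpow_add (v : List α) (a b : ℕ) : wpow v (a + b) = wpow v a ++ wpow v b := by
  induction a with
  | zero => rw [Nat.zero_add, wpow_zero, List.nil_append]
  | succ a ih => rw [Nat.succ_add, wpow_succ, wpow_succ, ih, List.append_assoc]

theorem wpow_succ' (v : List α) (n : ℕ) : wpow v (n + 1) = wpow v n ++ v := by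
  rw [wpow_add, wpow_one]

theorem length_wpow (v : List α) (n : ℕ) : (wpow v n).length = n * v.length := by
  induction n with
  | zero => rw [wpow_zero, List.length_nil, Nat.zero_mul]
  | succ n ih => rw [wpow_succ, List.length_append, ih, Nat.succ_mul, Nat.add_comm]

theorem hasPeriod_wpow (v : List α) (n : ℕ) : (wpow v n).HasPeriod v.length := by
  cases n with
  | zero => exact List.hasPeriod_empty _
  | succ n =>
    rw [List.HasPeriod, wpow_succ, List.take_left, List.prefix_append_right_inj, ← wpow_succ,
      wpow_succ']
    exact List.prefix_append _ _

theorem getElem?_wpow (v : List α) (n : ℕ) {i : ℕ} (hi : i < (wpow v n).length) :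
    (wpow v n)[i]? = v[i % v.length]? := by
  rw [← (hasPeriod_wpow v n).getElem?_mod _ _ _ hi]
  cases n with
  | zero => simp [wpow_zero] at hi
  | succ n =>
    have hv : 0 < v.length := by
      rw [length_wpow] at hi
      exact Nat.pos_of_ne_zero fun h => by simp [h] at hi
    rw [wpow_succ, List.getElem?_append_left (Nat.mod_lt _ hv)]

theorem rotate_wpow_length (v : List α) (n : ℕ) : (wpow v n).rotate v.length = wpow v n := by
  cases n with
  | zero => rfl
  | succ n => conv_lhs => rw [wpow_succ, List.rotate_append_length_eq, ← wpow_succ']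

theorem List.HasPeriod.eq_wpow_take {w : List α} {q : ℕ} (hw : w.HasPeriod q) (hq : 0 < q)
    (hdvd : q ∣ w.length) : w = wpow (w.take q) (w.length / q) := by
  rcases Nat.eq_zero_or_pos w.length with h0 | hpos
  · rw [List.length_eq_zero_iff.mp h0, List.length_nil, Nat.zero_div, wpow_zero]
  have htake : (w.take q).length = q := List.length_take_of_le (Nat.le_of_dvd hpos hdvd)
  have hlen : (wpow (w.take q) (w.length / q)).length = w.length := by
    rw [length_wpow, htake, Nat.div_mul_cancel hdvd]
  refine List.ext_getElem? fun i => ?_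
  by_cases hi : i < w.length
  · rw [getElem?_wpow _ _ (by rwa [hlen]), htake, List.getElem?_take_of_lt (Nat.mod_lt _ hq),
      hw.getElem?_mod _ _ _ hi]
  · rw [List.getElem?_eq_none (by omega), List.getElem?_eq_none (by omega)]

theorem Nat.exists_lt_add_modEq (a i : ℕ) {q : ℕ} (hq : 0 < q) :
    ∃ o < q, a + o ≡ i [MOD q] := by
  refine ⟨(i + (q * a - a)) % q, Nat.mod_lt _ hq, ?_⟩
  have ha : a ≤ q * a := Nat.le_mul_of_pos_left a hq
  calc a + (i + (q * a - a)) % q ≡ a + (i + (q * a - a)) [MOD q] :=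
        Nat.ModEq.add_left _ (Nat.mod_modEq _ _)
    _ = i + q * a := by omega
    _ ≡ i [MOD q] := Nat.add_mul_mod_self_left i q a

theorem List.HasPeriod.getElem?_eq_of_modEq {w : List α} {q i j : ℕ} (hw : w.HasPeriod q)
    (hi : i < w.length) (hj : j < w.length) (hij : i ≡ j [MOD q]) : w[i]? = w[j]? := by
  rw [← hw.getElem?_mod _ _ _ hi, ← hw.getElem?_mod _ _ _ hj, hij]

/-- A period `g` of a factor at least `q + g` long spreads to the whole word, because every
position can be moved into that factor by multiples of the period `q` of the whole word. -/
theorem List.HasPeriod.of_factor {u F v : List α} {q g : ℕ} (hw : (u ++ F ++ v).HasPeriod q)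
    (hq : 0 < q) (hF : F.HasPeriod g) (hlen : q + g ≤ F.length) :
    (u ++ F ++ v).HasPeriod g := by
  have hwlen : (u ++ F ++ v).length = u.length + F.length + v.length := by
    simp only [List.length_append]
  have hshift : ∀ o < F.length, (u ++ F ++ v)[u.length + o]? = F[o]? := fun o ho => by
    rw [List.append_assoc, List.getElem?_append_right (by omega), Nat.add_sub_cancel_left,
      List.getElem?_append_left ho]
  rw [List.hasPeriod_iff_getElem?] at hF ⊢
  intro i hi
  obtain ⟨o, ho, hoi⟩ := Nat.exists_lt_add_modEq u.length i hq
  rw [← hw.getElem?_eq_of_modEq (by omega) (by omega) hoi,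
    ← hw.getElem?_eq_of_modEq (i := u.length + o + g) (by omega) (by omega) (hoi.add_right g),
    Nat.add_assoc, hshift o (by omega), hshift (o + g) (by omega)]
  exact hF o (by omega)

-- The empty word qualifies: `[] = wpow [] 2`.
def IsProperPower (w : List α) : Prop :=
  ∃ (r : List α) (e : ℕ), 2 ≤ e ∧ w = wpow r e

theorem Primitive.not_isProperPower {p : List α} (hp : Primitive p) : ¬ IsProperPower p := by
  rintro ⟨r, e, he, hpr⟩
  have := hp.2 r e hpr
  omega

theorem Primitive.eq_length_of_hasPeriod {p : List α} {g : ℕ} (hp : Primitive p)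
    (hper : p.HasPeriod g) (hg : 0 < g) (hdvd : g ∣ p.length) : g = p.length :=
  Nat.eq_of_dvd_of_div_eq_one hdvd (hp.2 _ _ (hper.eq_wpow_take hg hdvd))

theorem Primitive.dvd_of_hasPeriod {p w : List α} {g : ℕ} (hp : Primitive p) (hpw : p <+: w)
    (hwp : w.HasPeriod p.length) (hwg : w.HasPeriod g) (hg : 0 < g)
    (hlen : p.length + g ≤ w.length) : p.length ∣ g := by
  have hgcd : w.HasPeriod (p.length.gcd g) := hwp.gcd hwg (by omega)
  rw [← hp.eq_length_of_hasPeriod (hgcd.infix hpw.isInfix) (Nat.gcd_pos_of_pos_right _ hg)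
    (Nat.gcd_dvd_left _ _)]
  exact Nat.gcd_dvd_right _ _

theorem IsProperPower.exists_hasPeriod {w : List α} (hw : IsProperPower w) (hne : w ≠ []) :
    ∃ q, 0 < q ∧ 2 * q ≤ w.length ∧ w.HasPeriod q := by
  obtain ⟨r, e, he, rfl⟩ := hw
  have hlen := List.length_pos_iff.mpr hne
  rw [length_wpow] at hlen ⊢
  exact ⟨r.length, Nat.pos_of_mul_pos_left hlen, Nat.mul_le_mul_right _ he, hasPeriod_wpow r e⟩

theorem IsProperPower.exists_rotate_eq {w : List α} (hw : IsProperPower w) (hne : w ≠ []) :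
    ∃ q, 0 < q ∧ q < w.length ∧ w.rotate q = w := by
  obtain ⟨r, e, he, rfl⟩ := hw
  have hlen := List.length_pos_iff.mpr hne
  rw [length_wpow] at hlen ⊢
  have hr := Nat.pos_of_mul_pos_left hlen
  exact ⟨r.length, hr, by nlinarith, rotate_wpow_length r e⟩

theorem Primitive.exists_not_isProperPower_pump {p x y z : List α} {m : ℕ} (hp : Primitive p)
    (hm : 1 ≤ m) (hpxyz : p = x ++ y ++ z) (hy : y ≠ []) (hz : z ≠ []) :
    ∃ i, ¬ IsProperPower (wpow p m ++ x ++ wpow y i ++ z) := by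
  set u := wpow p m ++ x with hu
  refine ⟨u.length + z.length + 2, fun hw => ?_⟩
  set i := u.length + z.length + 2 with hi
  have hy0 : 0 < y.length := List.length_pos_iff.mpr hy
  have hz0 : 0 < z.length := List.length_pos_iff.mpr hz
  have hplen : p.length = x.length + y.length + z.length := by
    rw [hpxyz, List.length_append, List.length_append]
  have hulen : u.length = m * p.length + x.length := by
    rw [hu, List.length_append, length_wpow]
  obtain ⟨q, hq0, hq, hwq⟩ := hw.exists_hasPeriod fun h => hz (List.append_eq_nil_iff.mp h).2
  have hFq : q + y.length ≤ (wpow y i).length := by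
    have : u.length + z.length + 2 * y.length ≤ i * y.length := by rw [hi]; nlinarith
    simp only [List.length_append, length_wpow] at hq ⊢
    omega
  -- The factor `yⁱ` also has period `q`, so Fine–Wilf gives it a period `g ≤ |y| < |p|`.
  set g := q.gcd y.length
  have hg0 : 0 < g := Nat.gcd_pos_of_pos_left _ hq0
  have hgy : g ≤ y.length := Nat.gcd_le_right _ hy0
  have hwg : (u ++ wpow y i ++ z).HasPeriod g :=
    hwq.of_factor hq0 (hwq.factor.gcd (hasPeriod_wpow y i) (by omega)) (by omega)
  have huy_w : u ++ y <+: u ++ wpow y i ++ z :=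
    ⟨wpow y (i - 1) ++ z, by rw [show i = i - 1 + 1 by omega, wpow_succ]; simp⟩
  have huy_p : u ++ y <+: wpow p (m + 1) :=
    ⟨z, by rw [hu, wpow_succ', hpxyz]; simp only [List.append_assoc]⟩
  have hp_uy : p <+: u ++ y := by
    obtain ⟨m', rfl⟩ : ∃ m', m = m' + 1 := ⟨m - 1, by omega⟩
    exact ⟨wpow p m' ++ x ++ y, by rw [hu, wpow_succ]; simp only [List.append_assoc]⟩
  have hdvd := hp.dvd_of_hasPeriod hp_uy ((hasPeriod_wpow p (m + 1)).infix huy_p.isInfix)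
    (hwg.infix huy_w.isInfix) hg0 (by simp only [List.length_append]; nlinarith)
  have := Nat.le_of_dvd hg0 hdvd
  omega

/-- Position `Q = P + n` keeps the old letter `v[P]`, yet the shift `q` forces `b` there: either
`Q + q = P`, or `Q + q` is unchanged and, by the shift `n`, carries the letter at `P + q`. -/
theorem List.set_rotate_ne_self {v : List α} {n q P : ℕ} {b : α} (hv : v.rotate n = v)
    (hn0 : 0 < n) (hn : n < v.length) (hq0 : 0 < q) (hq : q < v.length) (hP : P < v.length)
    (hb : v[P]? ≠ some b) : (v.set P b).rotate q ≠ v.set P b := by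
  intro hw
  set N := v.length
  have hwlen : (v.set P b).length = N := List.length_set
  have shift_v : ∀ i < N, v[(i + n) % N]? = v[i]? := fun i hi => by
    rw [← List.getElem?_rotate hi, hv]
  have shift_w : ∀ i < N, (v.set P b)[(i + q) % N]? = (v.set P b)[i]? := fun i hi => by
    rw [← hwlen, ← List.getElem?_rotate (hwlen ▸ hi), hw]
  have shift_ne : ∀ i < N, ∀ m, 0 < m → m < N → (i + m) % N ≠ i := fun i hi m hm0 hm h => by
    have : m ≡ 0 [MOD N] :=
      Nat.ModEq.add_left_cancel' i (by rwa [Nat.add_zero, Nat.ModEq, Nat.mod_eq_of_lt hi])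
    rw [Nat.ModEq, Nat.mod_eq_of_lt hm, Nat.zero_mod] at this
    omega
  have hwP : (v.set P b)[P]? = some b := List.getElem?_set_self hP
  have hwv : ∀ i, i ≠ P → (v.set P b)[i]? = v[i]? := fun i hi =>
    List.getElem?_set_ne (Ne.symm hi)
  set Q := (P + n) % N
  have hQ : Q ≠ P := shift_ne P hP n hn0 hn
  have hwQ : (v.set P b)[Q]? = v[P]? := by rw [hwv Q hQ, shift_v P hP]
  have hwQq : (v.set P b)[(Q + q) % N]? = some b := by
    by_cases hQq : (Q + q) % N = P
    · rw [hQq, hwP]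
    · have hQqn : (Q + q) % N = ((P + q) % N + n) % N := by
        simp only [Q, Nat.mod_add_mod, Nat.add_right_comm]
      rw [hwv _ hQq, hQqn, shift_v _ (Nat.mod_lt _ (by omega)),
        ← hwv _ (shift_ne P hP q hq0 hq), shift_w P hP, hwP]
  exact hb (hwQ ▸ shift_w Q (Nat.mod_lt _ (by omega)) ▸ hwQq)

theorem not_isProperPower_set_wpow {p : List α} {k j : ℕ} {b : α} (hk : 2 ≤ k)
    (hj : j < p.length) (hb : p[j]? ≠ some b) : ¬ IsProperPower ((wpow p k).set j b) := by
  intro hw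
  have hlen : (wpow p k).length = k * p.length := length_wpow p k
  have hne : (wpow p k).set j b ≠ [] := by
    rw [← List.length_pos_iff, List.length_set, hlen]
    nlinarith
  obtain ⟨q, hq0, hq, hrot⟩ := hw.exists_rotate_eq hne
  rw [List.length_set] at hq
  obtain ⟨k', rfl⟩ : ∃ k', k = k' + 1 := ⟨k - 1, by omega⟩
  refine List.set_rotate_ne_self (rotate_wpow_length p _) (by omega) (by nlinarith) hq0 hq
    (by nlinarith) ?_ hrot
  rwa [wpow_succ, List.getElem?_append_left hj]

theorem List.set_eq_self_of_getElem?_eq {l : List α} {i : ℕ} {a : α} (h : l[i]? = some a) :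
    l.set i a = l :=
  List.ext_getElem? fun n => by
    rw [List.getElem?_set]
    split_ifs <;> simp_all

theorem DFA.evalFrom_wpow_of_evalFrom_eq (M : DFA α σ) {s : σ} {y : List α}
    (hy : M.evalFrom s y = s) (i : ℕ) : M.evalFrom s (wpow y i) = s := by
  induction i with
  | zero => rfl
  | succ i ih => rw [wpow_succ, DFA.evalFrom_of_append, hy, ih]

theorem DFA.eval_eq_of_map_step_eq (M : DFA α σ) {x y : List α}
    (h : x.map (fun a s => M.step s a) = y.map (fun a s => M.step s a)) : M.eval x = M.eval y := by
  let N : DFA (σ → σ) σ := ⟨fun s f => f s, M.start, M.accept⟩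
  change (N.comap fun a s => M.step s a).eval x = (N.comap fun a s => M.step s a).eval y
  rw [DFA.eval_comap, DFA.eval_comap, h]

theorem exists_wpow_mem_of_mem_langRoot {K : Language α} (hK : ∀ w ∈ K, IsProperPower w)
    {p : List α} (hp : p ∈ langRoot K) : Primitive p ∧ ∃ k, 2 ≤ k ∧ wpow p k ∈ K := by
  obtain ⟨hprim, u, hu, d, hd, rfl⟩ := hp
  refine ⟨hprim, d, ?_, hu⟩
  by_contra! hd1
  obtain rfl : d = 1 := by omega
  exact hprim.not_isProperPower (wpow_one p ▸ hK _ hu)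

theorem length_le_card_of_mem_langRoot [Fintype σ] (M : DFA α σ)
    (hK : ∀ w ∈ M.accepts, IsProperPower w) {p : List α} (hp : p ∈ langRoot M.accepts) :
    p.length ≤ Fintype.card σ := by
  obtain ⟨hprim, k, hk, hpk⟩ := exists_wpow_mem_of_mem_langRoot hK hp
  by_contra! hlen
  obtain ⟨s, x, y, z, hxyz, hxy, hy, hx, hys, hz⟩ :=
    M.evalFrom_split (s := M.eval (wpow p (k - 1))) hlen.le rfl
  have hz_ne : z ≠ [] := by
    rintro rfl
    rw [hxyz, List.append_nil, List.length_append] at hlen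
    omega
  obtain ⟨i, hi⟩ := hprim.exists_not_isProperPower_pump (m := k - 1) (by omega) hxyz hy hz_ne
  refine hi (hK _ ?_)
  rw [DFA.mem_accepts] at hpk ⊢
  convert hpk using 1
  calc M.eval (wpow p (k - 1) ++ x ++ wpow y i ++ z)
      = M.evalFrom (M.evalFrom (M.evalFrom (M.eval (wpow p (k - 1))) x) (wpow y i)) z := by
        simp only [DFA.eval, DFA.evalFrom_of_append]
    _ = M.evalFrom (M.eval (wpow p (k - 1))) p := by
        rw [hx, M.evalFrom_wpow_of_evalFrom_eq hys, hz]
    _ = M.eval (wpow p k) := by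
        rw [DFA.eval, ← DFA.evalFrom_of_append, ← wpow_succ', Nat.sub_add_cancel (by omega)]

theorem injOn_map_step_langRoot (M : DFA α σ) (hK : ∀ w ∈ M.accepts, IsProperPower w) :
    (langRoot M.accepts).InjOn (List.map fun a s => M.step s a) := by
  intro p hp p' _ hmap
  obtain ⟨-, k, hk, hpk⟩ := exists_wpow_mem_of_mem_langRoot hK hp
  have hlen : p.length = p'.length := by simpa using congrArg List.length hmap
  by_contra hne
  obtain ⟨j, hj⟩ : ∃ j, p[j]? ≠ p'[j]? := by
    by_contra! h
    exact hne (List.ext_getElem? h)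
  have hj' : j < p'.length := by
    by_contra h
    exact hj (by rw [List.getElem?_eq_none (by omega), List.getElem?_eq_none (by omega)])
  have hjp : j < p.length := by omega
  rw [List.getElem?_eq_getElem hj'] at hj
  have hstep : (fun s => M.step s p[j]) = fun s => M.step s p'[j] := by
    have := congrArg (·[j]?) hmap
    simpa [List.getElem?_eq_getElem hjp, List.getElem?_eq_getElem hj'] using this
  refine not_isProperPower_set_wpow hk (by omega) hj (hK _ ?_)
  rw [DFA.mem_accepts, M.eval_eq_of_map_step_eq (y := wpow p k)]
  · exact hpk
  rw [List.map_set, ← hstep]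
  refine List.set_eq_self_of_getElem?_eq ?_
  rw [List.getElem?_map, getElem?_wpow _ _ (by rw [length_wpow]; nlinarith),
    Nat.mod_eq_of_lt hjp, List.getElem?_eq_getElem hjp, Option.map_some]

theorem Language.IsRegular.finite_langRoot {K : Language α} (hK : K.IsRegular)
    (hpow : ∀ w ∈ K, IsProperPower w) : Set.Finite (langRoot K) := by
  obtain ⟨σ, _, M, rfl⟩ := hK
  refine Set.Finite.of_finite_image ?_ (injOn_map_step_langRoot M hpow)
  refine (List.finite_length_le (σ → σ) (Fintype.card σ)).subset ?_
  rintro _ ⟨p, hp, rfl⟩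
  simpa using length_le_card_of_mem_langRoot M hpow hp

theorem isProperPower_of_mem_powL_sdiff {L : Language α} {w : List α}
    (hw : w ∈ powL L \ L) : IsProperPower w := by
  obtain ⟨⟨r, hr, k, rfl⟩, hnot⟩ := hw
  match k, hnot with
  | 0, _ => exact ⟨[], 2, le_rfl, rfl⟩
  | 1, h => exact absurd (by rwa [wpow_one]) h
  | k + 2, _ => exact ⟨r, k + 2, by omega, rfl⟩

theorem le_powL (L : Language α) : L ≤ powL L :=
  fun w hw => ⟨w, hw, 1, (wpow_one w).symm⟩

end

/-- Fazekas: for a regular language `L`, `pow(L)` is regular iff `pow(L) \ L` is a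
regular language with finite root. -/
theorem fazekas_pow_regular_iff {α : Type*} (L : Language α) (hL : L.IsRegular) :
    (powL L).IsRegular ↔
      (powL L \ L).IsRegular ∧ Set.Finite (langRoot (powL L \ L)) := by
  refine ⟨fun hpow => ?_, fun ⟨hK, _⟩ => ?_⟩
  · have hK : (powL L \ L).IsRegular := hpow.inf hL.compl
    exact ⟨hK, hK.finite_langRoot fun _ => isProperPower_of_mem_powL_sdiff⟩
  · rw [← Set.union_sdiff_cancel (le_powL L)]
    exact hL.add hK
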